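/- Given a {1,3}-inverse A^(1,3) of a quaternion tensor A, the set of all {1,3}-inverses of A equals { A^(1,3) + (I − A^(1,3)*A)*Z : Z arbitrary of appropriate size }, where I is the identity tensor. -/
import Mathlib


open scoped Quaternion BigOperators

noncomputable section

/-- A quaternion third-order tensor in `H^{n1 x n2 x n3}`, with the third
(circulant) index taken mod `n3`. -/
abbrev QT (n1 n2 n3 : ℕ) := Fin n1 → Fin n2 → ZMod n3 → ℍ[ℝ]

/-- The T-product of two quaternion tensors (circular convolution along the third mode). -/
def tmul {n1 n2 l n3 : ℕ} [NeZero n3] (A : QT n1 n2 n3) (B : QT n2 l n3) : QT n1 l n3 :=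
  fun i j k => ∑ p : Fin n2, ∑ m : ZMod n3, A i p m * B p j (k - m)

/-- The identity tensor: first frontal slice is the identity matrix, others zero. -/
def tid (n n3 : ℕ) : QT n n n3 := fun i j k => if i = j ∧ k = 0 then 1 else 0

/-- Conjugate transpose: conjugate-transpose each frontal slice and
reverse the order of slices 2 through n3. -/
def hconj {n1 n2 n3 : ℕ} (A : QT n1 n2 n3) : QT n2 n1 n3 :=
  fun j i k => star (A i j (-k))

/-- A {1,3}-inverse for the T-product. -/
def Is13Inverse {n1 n2 n3 : ℕ} [NeZero n3] (A : QT n1 n2 n3) (X : QT n2 n1 n3) : Prop :=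
  tmul (tmul A X) A = A ∧ hconj (tmul A X) = tmul A X

lemma tmul_apply {n1 n2 l n3 : ℕ} [NeZero n3] (A : QT n1 n2 n3) (B : QT n2 l n3)
    (i : Fin n1) (j : Fin l) (k : ZMod n3) :
    tmul A B i j k = ∑ x : Fin n2 × ZMod n3, A i x.1 x.2 * B x.1 j (k - x.2) := by
  rw [Fintype.sum_prod_type]; rfl

lemma tmul_assoc {n1 n2 l r n3 : ℕ} [NeZero n3] (A : QT n1 n2 n3) (B : QT n2 l n3)
    (C : QT l r n3) : tmul (tmul A B) C = tmul A (tmul B C) := by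
  funext i j k
  simp only [tmul_apply, Finset.sum_mul, Finset.mul_sum]
  rw [Finset.sum_comm]
  refine Finset.sum_congr rfl fun y _ => ?_
  refine Fintype.sum_equiv (Equiv.prodCongr (Equiv.refl _) (Equiv.subRight y.2)) _ _ fun x => ?_
  simp [mul_assoc, sub_sub, add_sub_cancel, Equiv.subRight]

lemma tid_tmul {n1 n2 n3 : ℕ} [NeZero n3] (B : QT n1 n2 n3) : tmul (tid n1 n3) B = B := by
  funext i j k
  simp [tmul, tid, ite_and, Finset.sum_ite_eq, Finset.sum_ite_eq']

lemma tmul_tid {n1 n2 n3 : ℕ} [NeZero n3] (B : QT n1 n2 n3) : tmul B (tid n2 n3) = B := by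
  funext i j k
  simp only [tmul, tid]
  rw [Finset.sum_comm]
  simp [ite_and, sub_eq_zero, mul_ite, Finset.sum_ite_eq, Finset.sum_ite_eq', eq_comm]

lemma hconj_tmul {n1 n2 l n3 : ℕ} [NeZero n3] (A : QT n1 n2 n3) (B : QT n2 l n3) :
    hconj (tmul A B) = tmul (hconj B) (hconj A) := by
  funext j i k
  simp only [hconj, tmul_apply, star_sum, star_mul]
  refine Fintype.sum_equiv (Equiv.prodCongr (Equiv.refl _) (Equiv.addLeft k)) _ _ fun x => ?_
  simp [Equiv.addLeft, hconj, neg_add, sub_eq_add_neg, add_comm]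

lemma tmul_sub {n1 n2 l n3 : ℕ} [NeZero n3] (A : QT n1 n2 n3) (B C : QT n2 l n3) :
    tmul A (B - C) = tmul A B - tmul A C := by
  funext i j k
  simp [tmul, mul_sub, Finset.sum_sub_distrib]

lemma sub_tmul {n1 n2 l n3 : ℕ} [NeZero n3] (A B : QT n1 n2 n3) (C : QT n2 l n3) :
    tmul (A - B) C = tmul A C - tmul B C := by
  funext i j k
  simp [tmul, sub_mul, Finset.sum_sub_distrib]

lemma tmul_add {n1 n2 l n3 : ℕ} [NeZero n3] (A : QT n1 n2 n3) (B C : QT n2 l n3) :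
    tmul A (B + C) = tmul A B + tmul A C := by
  funext i j k
  simp [tmul, mul_add, Finset.sum_add_distrib]

lemma zero_tmul {n1 n2 l n3 : ℕ} [NeZero n3] (C : QT n2 l n3) :
    tmul (0 : QT n1 n2 n3) C = 0 := by
  funext i j k
  simp [tmul]

lemma tmul_zero {n1 n2 l n3 : ℕ} [NeZero n3] (A : QT n1 n2 n3) :
    tmul A (0 : QT n2 l n3) = 0 := by
  funext i j k
  simp [tmul]

/-- For any two {1,3}-inverses, the product `A * X` is the same. -/
lemma ax_eq_ag {n1 n2 n3 : ℕ} [NeZero n3] {A : QT n1 n2 n3} {G X : QT n2 n1 n3}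
    (hG : Is13Inverse A G) (hX : Is13Inverse A X) : tmul A X = tmul A G := by
  obtain ⟨hG1, hG3⟩ := hG
  obtain ⟨hX1, hX3⟩ := hX
  calc tmul A X = hconj (tmul A X) := hX3.symm
    _ = tmul (hconj X) (hconj A) := hconj_tmul A X
    _ = tmul (hconj X) (hconj (tmul (tmul A G) A)) := by rw [hG1]
    _ = tmul (hconj X) (tmul (hconj A) (tmul A G)) := by rw [hconj_tmul, hG3]
    _ = tmul (tmul (hconj X) (hconj A)) (tmul A G) := (tmul_assoc _ _ _).symm
    _ = tmul (hconj (tmul A X)) (tmul A G) := by rw [hconj_tmul]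
    _ = tmul (tmul A X) (tmul A G) := by rw [hX3]
    _ = tmul (tmul (tmul A X) A) G := (tmul_assoc (tmul A X) A G).symm
    _ = tmul A G := by rw [hX1]

theorem inverse13_set {n1 n2 n3 : ℕ} [NeZero n3]
    (A : QT n1 n2 n3) (G : QT n2 n1 n3) (hG : Is13Inverse A G) :
    {X : QT n2 n1 n3 | Is13Inverse A X} =
      {X : QT n2 n1 n3 | ∃ Z : QT n2 n1 n3,
        X = G + tmul (tid n2 n3 - tmul G A) Z} := by
  ext X
  simp only [Set.mem_setOf_eq]
  constructor
  · intro hX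
    refine ⟨X - G, ?_⟩
    have hAXG : tmul A (X - G) = 0 := by
      rw [tmul_sub, ax_eq_ag hG hX, sub_self]
    rw [sub_tmul, tid_tmul, tmul_assoc, hAXG, tmul_zero, sub_zero]
    abel
  · rintro ⟨Z, rfl⟩
    have key : tmul A (G + tmul (tid n2 n3 - tmul G A) Z) = tmul A G := by
      rw [tmul_add, ← tmul_assoc, tmul_sub, tmul_tid, ← tmul_assoc, hG.1, sub_self,
        zero_tmul, add_zero]
    constructor
    · rw [key, hG.1]
    · rw [key, hG.2]
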